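/- Let X be a finite-dimensional real vector space, q an asymmetric norm on X, and A ⊆ X a strongly compact set. Then the convex hull conv(A) is also strongly compact. -/

import Mathlib

open Pointwise Set

/-- An asymmetric norm on a real vector space `X`. -/
structure IsAsymmetricNorm {X : Type*} [AddCommGroup X] [Module ℝ X] (q : X → ℝ) : Prop where
  nonneg : ∀ x, 0 ≤ q x
  smul_eq : ∀ a : ℝ, 0 ≤ a → ∀ x, q (a • x) = a * q x
  add_le : ∀ x y, q (x + y) ≤ q x + q y
  eq_zero : ∀ x, q x = 0 → q (-x) = 0 → x = 0

/-- The topology `τ_q` generated by the open balls of `q`. -/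
def asymTop {X : Type*} [AddCommGroup X] [Module ℝ X] (q : X → ℝ) : TopologicalSpace X :=
  TopologicalSpace.generateFrom {U | ∃ x : X, ∃ ε : ℝ, 0 < ε ∧ U = {y | q (y - x) < ε}}

/-- The symmetrization `q^s` of `q`. -/
def symNorm {X : Type*} [AddCommGroup X] (q : X → ℝ) (x : X) : ℝ := max (q x) (q (-x))

/-- The cone `θ_q = {x : q x = 0}`. -/
def theta {X : Type*} [AddCommGroup X] (q : X → ℝ) : Set X := {x | q x = 0}

/-- The closed ball `B_r^q[x] = {y : q (y - x) ≤ r}`. -/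
def closedBallA {X : Type*} [AddCommGroup X] (q : X → ℝ) (x : X) (r : ℝ) : Set X :=
  {y | q (y - x) ≤ r}

/-- A set `K` is strongly compact (w.r.t. the asymmetric norm `q`) if there is a set `S`,
compact in the topology of the norm `q^s`, with `S ⊆ K ⊆ S + θ_q`. -/
def StronglyCompact {X : Type*} [AddCommGroup X] [Module ℝ X] (q : X → ℝ) (K : Set X) : Prop :=
  ∃ S : Set X, @IsCompact X (asymTop (symNorm q)) S ∧ S ⊆ K ∧ K ⊆ S + theta q

/-- `q` is right bounded if `r • B_1^q[0] ⊆ B_1^{q^s}[0] + θ_q` for some `r > 0`. -/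
def RightBounded {X : Type*} [AddCommGroup X] [Module ℝ X] (q : X → ℝ) : Prop :=
  ∃ r : ℝ, 0 < r ∧ r • closedBallA q 0 1 ⊆ closedBallA (symNorm q) 0 1 + theta q

/-- `q` is 1-bounded if `B_1^q[0] ⊆ B_1^{q^s}[0] + θ_q`. -/
def OneBounded {X : Type*} [AddCommGroup X] [Module ℝ X] (q : X → ℝ) : Prop :=
  closedBallA q 0 1 ⊆ closedBallA (symNorm q) 0 1 + theta q

/-- Two asymmetric norms are equivalent if `κ·q ≤ p ≤ l·q` for some `κ, l > 0`. -/
def EquivNorms {X : Type*} [AddCommGroup X] (p q : X → ℝ) : Prop :=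
  ∃ κ l : ℝ, 0 < κ ∧ 0 < l ∧ ∀ x, κ * q x ≤ p x ∧ p x ≤ l * q x

/-- `X` is strongly locally compact (w.r.t. `τ_q`) if every point has a local base of
strongly compact sets. -/
def StronglyLocallyCompact {X : Type*} [AddCommGroup X] [Module ℝ X] (q : X → ℝ) : Prop :=
  ∀ x : X, ∀ U ∈ @nhds X (asymTop q) x,
    ∃ K : Set X, StronglyCompact q K ∧ K ∈ @nhds X (asymTop q) x ∧ K ⊆ U


/-!
The symmetrization `q^s` is a genuine norm, so on a finite-dimensional space its topology is a
vector topology, in which convex hulls of compact sets are compact: by Carathéodory, `conv S` is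
the continuous image of a simplex times `S^(n+1)`. If `S ⊆ A ⊆ S + θ_q` with `S` compact, then,
`θ_q` being convex, `conv S ⊆ conv A ⊆ conv S + conv θ_q = conv S + θ_q`.
-/

section ConvexHull

variable {𝕜 E : Type*} [Field 𝕜] [LinearOrder 𝕜] [IsStrictOrderedRing 𝕜]
  [AddCommGroup E] [Module 𝕜 E]

/-- Carathéodory's theorem, with convex combinations padded by zero weights to exactly
`finrank 𝕜 E + 1` points. -/
theorem convexHull_eq_image_stdSimplex_prod_pi [FiniteDimensional 𝕜 E] (s : Set E) :
    convexHull 𝕜 s =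
      (fun p : (Fin (Module.finrank 𝕜 E + 1) → 𝕜) × (Fin (Module.finrank 𝕜 E + 1) → E) =>
        ∑ i, p.1 i • p.2 i) '' (stdSimplex 𝕜 _ ×ˢ univ.pi fun _ => s) := by
  classical
  refine Subset.antisymm (fun x hx => ?_) ?_
  · obtain ⟨s₀, hs₀⟩ := convexHull_nonempty_iff.1 ⟨x, hx⟩
    obtain ⟨ι, _, z, w, hzs, hind, hwpos, hwsum, rfl⟩ := eq_pos_convex_span_of_mem_convexHull hx
    obtain ⟨e⟩ : Nonempty (ι ↪ Fin (Module.finrank 𝕜 E + 1)) := by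
      refine Function.Embedding.nonempty_of_card_le ?_
      rw [Fintype.card_fin]
      exact hind.card_le_finrank_succ.trans (by gcongr; exact Submodule.finrank_le _)
    set W := Function.extend e w 0
    set Z := Function.extend e z fun _ => s₀
    have hW : ∀ i, W (e i) = w i := fun i => e.injective.extend_apply _ _ _
    have hZ : ∀ i, Z (e i) = z i := fun i => e.injective.extend_apply _ _ _
    have hW₀ : ∀ k ∉ range e, W k = 0 := fun k hk => Function.extend_apply' _ _ _ hk
    have hZ₀ : ∀ k ∉ range e, Z k = s₀ := fun k hk => Function.extend_apply' _ _ _ hk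
    refine ⟨(W, Z), ⟨⟨fun k => ?_, ?_⟩, fun k _ => ?_⟩, ?_⟩
    · show 0 ≤ W k
      rcases em (k ∈ range e) with ⟨i, rfl⟩ | hk
      · exact (hW i).symm ▸ (hwpos i).le
      · exact (hW₀ k hk).ge
    · rw [← hwsum]
      exact (Fintype.sum_of_injective e e.injective w W hW₀ fun i => (hW i).symm).symm
    · show Z k ∈ s
      rcases em (k ∈ range e) with ⟨i, rfl⟩ | hk
      · exact (hZ i).symm ▸ hzs (mem_range_self i)
      · exact (hZ₀ k hk).symm ▸ hs₀
    · refine (Fintype.sum_of_injective e e.injective _ _ (fun k hk => ?_) fun i => ?_).symm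
      · simp only [hW₀ k hk, zero_smul]
      · simp only [hW, hZ]
  · rintro _ ⟨⟨w, z⟩, ⟨hw, hz⟩, rfl⟩
    exact (convex_convexHull 𝕜 s).sum_mem (fun i _ => hw.1 i) hw.2
      fun i _ => subset_convexHull 𝕜 s (hz i (mem_univ i))

theorem IsCompact.convexHull [TopologicalSpace 𝕜] [OrderClosedTopology 𝕜] [CompactIccSpace 𝕜]
    [ContinuousAdd 𝕜] [TopologicalSpace E] [ContinuousAdd E] [ContinuousSMul 𝕜 E]
    [FiniteDimensional 𝕜 E]
    {s : Set E} (hs : IsCompact s) : IsCompact (convexHull 𝕜 s) := by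
  rw [convexHull_eq_image_stdSimplex_prod_pi]
  exact ((isCompact_stdSimplex 𝕜 _).prod (isCompact_univ_pi fun _ => hs)).image (by fun_prop)

end ConvexHull

theorem asymTop_norm {E : Type*} [SeminormedAddCommGroup E] [Module ℝ E] :
    asymTop (fun x : E => ‖x‖) = (inferInstance : TopologicalSpace E) := by
  refine (TopologicalSpace.isTopologicalBasis_of_isOpen_of_nhds ?_ ?_).eq_generateFrom.symm
  · rintro _ ⟨x, ε, -, rfl⟩
    simpa only [Metric.ball, dist_eq_norm] using Metric.isOpen_ball (x := x) (ε := ε)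
  · intro a U ha hU
    obtain ⟨ε, hε, hball⟩ := Metric.isOpen_iff.1 hU a ha
    exact ⟨_, ⟨a, ε, hε, rfl⟩, by simpa using hε, fun y hy => hball (mem_ball_iff_norm.2 hy)⟩

theorem symNorm_neg {X : Type*} [AddCommGroup X] (q : X → ℝ) (x : X) :
    symNorm q (-x) = symNorm q x := by
  simp only [symNorm, neg_neg, max_comm]

namespace IsAsymmetricNorm

variable {X : Type*} [AddCommGroup X] [Module ℝ X] {q : X → ℝ}

theorem map_zero (hq : IsAsymmetricNorm q) : q 0 = 0 := by
  simpa using hq.smul_eq 0 le_rfl 0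

theorem convex_theta (hq : IsAsymmetricNorm q) : Convex ℝ (theta q) := by
  intro x hx y hy a b ha hb _
  refine le_antisymm ?_ (hq.nonneg _)
  calc q (a • x + b • y) ≤ q (a • x) + q (b • y) := hq.add_le _ _
    _ = 0 := by
      rw [hq.smul_eq a ha, hq.smul_eq b hb, hx.out, hy.out, mul_zero, mul_zero, add_zero]

theorem symNorm_add_le (hq : IsAsymmetricNorm q) (x y : X) :
    symNorm q (x + y) ≤ symNorm q x + symNorm q y := by
  refine max_le ((hq.add_le x y).trans (add_le_add (le_max_left _ _) (le_max_left _ _))) ?_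
  rw [neg_add]
  exact (hq.add_le (-x) (-y)).trans (add_le_add (le_max_right _ _) (le_max_right _ _))

theorem eq_zero_of_symNorm_eq_zero (hq : IsAsymmetricNorm q) {x : X} (hx : symNorm q x = 0) :
    x = 0 :=
  hq.eq_zero x (le_antisymm (hx ▸ le_max_left _ _) (hq.nonneg x))
    (le_antisymm (hx ▸ le_max_right _ _) (hq.nonneg (-x)))

theorem symNorm_smul_of_nonneg (hq : IsAsymmetricNorm q) {a : ℝ} (ha : 0 ≤ a) (x : X) :
    symNorm q (a • x) = a * symNorm q x := by
  rw [symNorm, symNorm, ← smul_neg, hq.smul_eq a ha, hq.smul_eq a ha, mul_max_of_nonneg _ _ ha]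

theorem symNorm_smul (hq : IsAsymmetricNorm q) (a : ℝ) (x : X) :
    symNorm q (a • x) = |a| * symNorm q x := by
  rcases le_total 0 a with ha | ha
  · rw [hq.symNorm_smul_of_nonneg ha, abs_of_nonneg ha]
  · rw [← neg_smul_neg, hq.symNorm_smul_of_nonneg (neg_nonneg.2 ha), symNorm_neg,
      abs_of_nonpos ha]

abbrev symNormedAddCommGroup (hq : IsAsymmetricNorm q) : NormedAddCommGroup X :=
  AddGroupNorm.toNormedAddCommGroup
    { toFun := symNorm q
      map_zero' := by simp only [symNorm, neg_zero, hq.map_zero, max_self]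
      add_le' := hq.symNorm_add_le
      neg' := symNorm_neg q
      eq_zero_of_map_eq_zero' := fun _ => hq.eq_zero_of_symNorm_eq_zero }

abbrev symNormedSpace (hq : IsAsymmetricNorm q) :
    letI := hq.symNormedAddCommGroup
    NormedSpace ℝ X :=
  letI := hq.symNormedAddCommGroup
  { norm_smul_le := fun a x => (hq.symNorm_smul a x).le }

theorem isCompact_convexHull [FiniteDimensional ℝ X] (hq : IsAsymmetricNorm q) {S : Set X}
    (hS : @IsCompact X (asymTop (symNorm q)) S) :
    @IsCompact X (asymTop (symNorm q)) (convexHull ℝ S) := by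
  let := hq.symNormedAddCommGroup
  let := hq.symNormedSpace
  have htop : asymTop (symNorm q) = (inferInstance : TopologicalSpace X) := asymTop_norm
  rw [htop] at hS ⊢
  exact hS.convexHull

end IsAsymmetricNorm

theorem statement7 {X : Type*} [AddCommGroup X] [Module ℝ X] [FiniteDimensional ℝ X]
    (q : X → ℝ) (hq : IsAsymmetricNorm q) (A : Set X)
    (hA : StronglyCompact q A) :
    StronglyCompact q (convexHull ℝ A) := by
  obtain ⟨S, hS, hSA, hAS⟩ := hA
  refine ⟨convexHull ℝ S, hq.isCompact_convexHull hS, convexHull_mono hSA, ?_⟩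
  calc convexHull ℝ A ⊆ convexHull ℝ (S + theta q) := convexHull_mono hAS
    _ = convexHull ℝ S + theta q := by rw [convexHull_add, hq.convex_theta.convexHull_eq]
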